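/- arXiv:1505.06168 — 2 statements merged into one kernel-verified Lean document; each statement's English description precedes it below -/
import Mathlib

section
/- Let E be a real normed vector space, let X ⊆ E be a finite set, and let θ ≥ 0. For x, y ∈ X, the points x and y lie in the same path-connected component of the union U = ⋃_{z∈X} closedBall(z, θ) if and only if there is a finite sequence x = z₀, z₁, …, z_m = y of points of X with dist(z_{i}, z_{i+1}) ≤ 2θ for all i (i.e., x and y are connected in the Vietoris–Rips graph of X at scale θ). -/
/-!
Consecutive points of a chain with steps at most `2θ` have intersecting balls, and balls are
convex, hence path-connected, so a chain yields a path in `U`. Conversely, let `S` be the set of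
points of `X` reachable from `x` by such chains. The balls around `S` and the balls around `X \ S`
form two closed sets (finite unions of closed balls) which cover `U` and are disjoint, since a
ball around `S` meeting a ball around `w` would put `w` in `S`. A path in `U` from `x` has
preconnected range, so it stays in the first set, and its endpoint `y` lies in a ball around some
point of `S`.
-/

open Metric Relation

section Chains

variable {α : Type*} {p : α → Prop} {r : α → α → Prop} {x y : α}

theorem reflTransGen_of_fin_chain {m : ℕ} {z : Fin (m + 1) → α}
    (hz : ∀ i : Fin m, r (z i.castSucc) (z i.succ)) (i : Fin (m + 1)) :
    ReflTransGen r (z 0) (z i) := by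
  induction i using Fin.induction with
  | zero => exact .refl
  | succ j ih => exact ih.tail (hz j)

theorem exists_fin_chain_of_reflTransGen (h : ReflTransGen r x y) :
    ∃ m : ℕ, ∃ z : Fin (m + 1) → α, z 0 = x ∧ z (Fin.last m) = y ∧
      ∀ i : Fin m, r (z i.castSucc) (z i.succ) := by
  induction h using ReflTransGen.head_induction_on with
  | refl => exact ⟨0, fun _ => y, rfl, rfl, Fin.elim0⟩
  | head hab _ ih =>
    obtain ⟨m, z, hz0, hzm, hz⟩ := ih
    refine ⟨m + 1, Fin.cons _ z, rfl, by simpa [Fin.cons_last] using hzm, ?_⟩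
    intro i
    cases i using Fin.cases with
    | zero => simpa [hz0] using hab
    | succ j => simpa using hz j

theorem exists_fin_chain_iff_reflTransGen (hx : p x) :
    (∃ m : ℕ, ∃ z : Fin (m + 1) → α, (∀ i, p (z i)) ∧ z 0 = x ∧ z (Fin.last m) = y ∧
      ∀ i : Fin m, r (z i.castSucc) (z i.succ)) ↔
      ReflTransGen (fun a b => p a ∧ p b ∧ r a b) x y := by
  constructor
  · rintro ⟨m, z, hp, rfl, rfl, hz⟩
    exact reflTransGen_of_fin_chain (fun i => ⟨hp _, hp _, hz i⟩) _
  · intro h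
    obtain ⟨m, z, hz0, hzm, hz⟩ := exists_fin_chain_of_reflTransGen h
    refine ⟨m, z, fun i => ?_, hz0, hzm, fun i => (hz i).2.2⟩
    cases i using Fin.cases with
    | zero => exact hz0 ▸ hx
    | succ j => exact (hz j).2.1

end Chains

theorem JoinedIn.mem_of_isClosed {T : Type*} [TopologicalSpace T] {F A B : Set T} {x y : T}
    (h : JoinedIn F x y) (hA : IsClosed A) (hB : IsClosed B) (hFAB : F ⊆ A ∪ B)
    (hAB : Disjoint A B) (hx : x ∈ A) : y ∈ A := by
  obtain ⟨γ, hγ⟩ := h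
  have hcover : Set.range γ ⊆ A ∪ B := Set.range_subset_iff.2 fun t => hFAB (hγ t)
  rcases isPreconnected_iff_subset_of_disjoint_closed.1 (isPreconnected_range γ.continuous)
    A B hA hB hcover (by simp [hAB.inter_eq]) with hsub | hsub
  · exact hsub ⟨1, γ.target⟩
  · exact absurd (hsub ⟨0, γ.source⟩) (hAB.notMem_of_mem_left hx)

section Overlap

variable {ι T : Type*} [TopologicalSpace T] {s : Set ι} {F : ι → Set T} {i j : ι} {p q : T}

def OverlapRel (s : Set ι) (F : ι → Set T) (a b : ι) : Prop :=
  a ∈ s ∧ b ∈ s ∧ (F a ∩ F b).Nonempty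

theorem reflTransGen_overlapRel_of_joinedIn (hs : s.Finite) (hF : ∀ k ∈ s, IsClosed (F k))
    (hi : i ∈ s) (hj : j ∈ s) (hp : p ∈ F i) (hq : q ∈ F j)
    (h : JoinedIn (⋃ k ∈ s, F k) p q) : ReflTransGen (OverlapRel s F) i j := by
  set S := {k ∈ s | ReflTransGen (OverlapRel s F) i k}
  have hclosed : ∀ t ⊆ s, IsClosed (⋃ k ∈ t, F k) := fun t ht =>
    (hs.subset ht).isClosed_biUnion fun k hk => hF k (ht hk)
  have hcover : (⋃ k ∈ s, F k) ⊆ (⋃ k ∈ S, F k) ∪ ⋃ k ∈ s \ S, F k := by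
    rw [← Set.biUnion_union, Set.union_sdiff_cancel (Set.sep_subset _ _)]
  have hdisj : Disjoint (⋃ k ∈ S, F k) (⋃ k ∈ s \ S, F k) := by
    simp only [Set.disjoint_iUnion_left, Set.disjoint_iUnion_right]
    intro w hw v hv
    rw [Set.disjoint_iff_inter_eq_empty, ← Set.not_nonempty_iff_eq_empty]
    exact fun hvw => hw.2 ⟨hw.1, hv.2.tail ⟨hv.1, hw.1, hvw⟩⟩
  obtain ⟨k, hkS, hqk⟩ := Set.mem_iUnion₂.1 <| h.mem_of_isClosed (hclosed _ (Set.sep_subset _ _))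
    (hclosed _ Set.sdiff_subset) hcover hdisj (Set.mem_biUnion ⟨hi, .refl⟩ hp)
  exact hkS.2.tail ⟨hkS.1, hj, q, hqk, hq⟩

theorem joinedIn_of_reflTransGen_overlapRel (hF : ∀ k ∈ s, IsPathConnected (F k)) (hi : i ∈ s)
    (h : ReflTransGen (OverlapRel s F) i j) (hp : p ∈ F i) (hq : q ∈ F j) :
    JoinedIn (⋃ k ∈ s, F k) p q := by
  induction h generalizing q with
  | refl => exact ((hF i hi).joinedIn p hp q hq).mono (Set.subset_biUnion_of_mem hi)
  | tail _ hbc ih =>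
    obtain ⟨-, hc, w, hwb, hwc⟩ := hbc
    exact (ih hwb).trans <| ((hF _ hc).joinedIn w hwc q hq).mono (Set.subset_biUnion_of_mem hc)

end Overlap

theorem closedBall_inter_closedBall_nonempty_iff {E : Type*} [NormedAddCommGroup E]
    [NormedSpace ℝ E] {a b : E} {θ : ℝ} (hθ : 0 ≤ θ) :
    (closedBall a θ ∩ closedBall b θ).Nonempty ↔ dist a b ≤ 2 * θ := by
  rw [two_mul]
  refine ⟨dist_le_add_of_nonempty_closedBall_inter_closedBall, fun h => ?_⟩
  obtain ⟨c, hac, hcb⟩ := exists_dist_le_le hθ hθ h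
  exact ⟨c, by rwa [mem_closedBall, dist_comm], hcb⟩

/-- For a finite set `X` in a real normed vector space and `θ ≥ 0`, two points `x, y ∈ X`
lie in the same path-connected component of the union `U = ⋃ z ∈ X, closedBall z θ`
if and only if they are connected by a chain `x = z₀, z₁, …, z_m = y` of points of `X`
with consecutive distances at most `2θ` (i.e. connected in the Vietoris–Rips graph). -/
theorem joinedIn_union_closedBall_iff_vietorisRips_chain {E : Type*} [NormedAddCommGroup E]
    [NormedSpace ℝ E] (X : Set E) (hX : X.Finite) (θ : ℝ) (hθ : 0 ≤ θ)
    (x y : E) (hx : x ∈ X) (hy : y ∈ X) :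
    JoinedIn (⋃ z ∈ X, Metric.closedBall z θ) x y ↔
      ∃ m : ℕ, ∃ z : Fin (m + 1) → E, (∀ i, z i ∈ X) ∧ z 0 = x ∧ z (Fin.last m) = y ∧
        ∀ i : Fin m, dist (z i.castSucc) (z i.succ) ≤ 2 * θ := by
  have hR : (fun a b => a ∈ X ∧ b ∈ X ∧ dist a b ≤ 2 * θ) = OverlapRel X (closedBall · θ) := by
    ext a b
    rw [OverlapRel, closedBall_inter_closedBall_nonempty_iff hθ]
  have hxθ := mem_closedBall_self (x := x) hθ
  have hyθ := mem_closedBall_self (x := y) hθ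
  rw [exists_fin_chain_iff_reflTransGen (r := fun a b => dist a b ≤ 2 * θ) hx, hR]
  refine ⟨reflTransGen_overlapRel_of_joinedIn hX (fun z _ => isClosed_closedBall) hx hy hxθ hyθ,
    fun h => joinedIn_of_reflTransGen_overlapRel (fun z _ => ?_) hx h hxθ hyθ⟩
  exact (convex_closedBall z θ).isPathConnected ⟨z, mem_closedBall_self hθ⟩
end

section
/- Let β, ν, α, χ ∈ ℝ, let λ > 0 and set κ = 2π/λ. Let ω : ℝ × ℝ × ℝ → ℝ be a function of (x, y, t) that is twice differentiable in (x, y) and differentiable in t, and let u = (u₁, u₂) : ℝ × ℝ × ℝ → ℝ² be differentiable in (x, y). Suppose that at every point: (i) ∂ω/∂t + β(u₁ ∂ω/∂x + u₂ ∂ω/∂y) = ν(∂²ω/∂x² + ∂²ω/∂y²) − αω + χκ cos(κy); (ii) ∂u₁/∂x + ∂u₂/∂y = 0; and (iii) ω = ∂u₂/∂x − ∂u₁/∂y. Then the transformed fields ω′(x, y, t) = −ω(−x, y + λ/2, t) and u′(x, y, t) = (−u₁(−x, y + λ/2, t), u₂(−x, y + λ/2, t)) also satisfy (i), (ii), and (iii)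 at every point. -/
/-!
Each transformed equation is the original one evaluated at `(−x, y + λ/2, t)`. By the chain
rule an `x`-derivative of a reflected field picks up a sign (twice for `∂²/∂x²`), while the shift
does not affect `y`-derivatives; since `κλ/2 = π`, the forcing `cos(κ(y + λ/2)) = −cos(κy)`
changes sign together with `ω`.
-/

section ReflectionShift

variable {𝕜 F : Type*} [NontriviallyNormedField 𝕜] [NormedAddCommGroup F] [NormedSpace 𝕜 F]
  (f : 𝕜 → F) (c x : 𝕜)

theorem deriv_neg_comp_neg : deriv (fun s => -f (-s)) x = deriv f (-x) := by
  rw [deriv.fun_neg, deriv_comp_neg, neg_neg]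

theorem deriv_neg_comp_add_const : deriv (fun s => -f (s + c)) x = -deriv f (x + c) := by
  rw [deriv.fun_neg, deriv_comp_add_const]

theorem deriv_deriv_neg_comp_neg :
    deriv (fun s => deriv (fun r => -f (-r)) s) x = -deriv (deriv f) (-x) := by
  simp only [deriv_neg_comp_neg, deriv_comp_neg]

theorem deriv_deriv_neg_comp_add_const :
    deriv (fun s => deriv (fun r => -f (r + c)) s) x = -deriv (deriv f) (x + c) := by
  simp only [deriv_neg_comp_add_const]

end ReflectionShift

theorem Real.cos_mul_add_half_of_mul_eq_two_pi {κ lam : ℝ} (h : κ * lam = 2 * Real.pi) (y : ℝ) :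
    Real.cos (κ * (y + lam / 2)) = -Real.cos (κ * y) := by
  rw [show κ * (y + lam / 2) = κ * y + Real.pi by linarith, Real.cos_add_pi]

theorem kolmogorov_vorticity_invariant_reflection_shift_general (β ν α χ : ℝ) (lam : ℝ)
    (hlam : 0 < lam) (κ : ℝ) (hκ : κ = 2 * Real.pi / lam)
    (ω u₁ u₂ : ℝ → ℝ → ℝ → ℝ)
    (heq : ∀ x y t,
      deriv (fun s => ω x y s) t +
        β * (u₁ x y t * deriv (fun s => ω s y t) x + u₂ x y t * deriv (fun s => ω x s t) y) =
      ν * (deriv (fun s => deriv (fun r => ω r y t) s) x +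
           deriv (fun s => deriv (fun r => ω x r t) s) y) -
        α * ω x y t + χ * κ * Real.cos (κ * y))
    (hdiv : ∀ x y t, deriv (fun s => u₁ s y t) x + deriv (fun s => u₂ x s t) y = 0)
    (hvort : ∀ x y t, ω x y t = deriv (fun s => u₂ s y t) x - deriv (fun s => u₁ x s t) y) :
    (∀ x y t,
      deriv (fun s => -ω (-x) (y + lam / 2) s) t +
        β * ((-u₁ (-x) (y + lam / 2) t) * deriv (fun s => -ω (-s) (y + lam / 2) t) x +
             u₂ (-x) (y + lam / 2) t * deriv (fun s => -ω (-x) (s + lam / 2) t) y) =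
      ν * (deriv (fun s => deriv (fun r => -ω (-r) (y + lam / 2) t) s) x +
           deriv (fun s => deriv (fun r => -ω (-x) (r + lam / 2) t) s) y) -
        α * (-ω (-x) (y + lam / 2) t) + χ * κ * Real.cos (κ * y)) ∧
    (∀ x y t,
      deriv (fun s => -u₁ (-s) (y + lam / 2) t) x +
        deriv (fun s => u₂ (-x) (s + lam / 2) t) y = 0) ∧
    (∀ x y t, -ω (-x) (y + lam / 2) t =
      deriv (fun s => u₂ (-s) (y + lam / 2) t) x -
        deriv (fun s => -u₁ (-x) (s + lam / 2) t) y) := by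
  have hκlam : κ * lam = 2 * Real.pi := by rw [hκ, div_mul_cancel₀ _ hlam.ne']
  refine ⟨fun x y t => ?_, fun x y t => ?_, fun x y t => ?_⟩
  · have h := heq (-x) (y + lam / 2) t
    rw [Real.cos_mul_add_half_of_mul_eq_two_pi hκlam] at h
    rw [deriv.fun_neg, deriv_neg_comp_neg (ω · (y + lam / 2) t),
      deriv_neg_comp_add_const (ω (-x) · t), deriv_deriv_neg_comp_neg (ω · (y + lam / 2) t),
      deriv_deriv_neg_comp_add_const (ω (-x) · t)]
    linarith
  · rw [deriv_neg_comp_neg (u₁ · (y + lam / 2) t), deriv_comp_add_const (u₂ (-x) · t)]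
    exact hdiv (-x) (y + lam / 2) t
  · rw [deriv_comp_neg (u₂ · (y + lam / 2) t), deriv_neg_comp_add_const (u₁ (-x) · t)]
    linarith [hvort (-x) (y + lam / 2) t]

/-- The vorticity formulation of the generalized Kolmogorov flow with forcing wavenumber
`κ = 2π/λ`, `∂ω/∂t + β u·∇ω = ν ∇²ω − αω + χκ cos(κ y)`, together with incompressibility
`∂u₁/∂x + ∂u₂/∂y = 0` and the vorticity relation `ω = ∂u₂/∂x − ∂u₁/∂y`, is invariant
under the combined reflection and half-wavelength shift `D(x, y) = (−x, y + λ/2)`, with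
`ω'(x,y,t) = −ω(−x, y + λ/2, t)` and `u'(x,y,t) = (−u₁(−x, y + λ/2, t), u₂(−x, y + λ/2, t))`. -/
theorem kolmogorov_vorticity_invariant_reflection_shift (β ν α χ : ℝ) (lam : ℝ)
    (hlam : 0 < lam) (κ : ℝ) (hκ : κ = 2 * Real.pi / lam)
    (ω u₁ u₂ : ℝ → ℝ → ℝ → ℝ)
    (hω2 : ∀ t, Differentiable ℝ (fun p : ℝ × ℝ => ω p.1 p.2 t) ∧
      Differentiable ℝ (fderiv ℝ (fun p : ℝ × ℝ => ω p.1 p.2 t)))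
    (hωt : ∀ x y, Differentiable ℝ (fun s => ω x y s))
    (hu : ∀ t, Differentiable ℝ (fun p : ℝ × ℝ => (u₁ p.1 p.2 t, u₂ p.1 p.2 t)))
    (heq : ∀ x y t,
      deriv (fun s => ω x y s) t +
        β * (u₁ x y t * deriv (fun s => ω s y t) x + u₂ x y t * deriv (fun s => ω x s t) y) =
      ν * (deriv (fun s => deriv (fun r => ω r y t) s) x +
           deriv (fun s => deriv (fun r => ω x r t) s) y) -
        α * ω x y t + χ * κ * Real.cos (κ * y))
    (hdiv : ∀ x y t, deriv (fun s => u₁ s y t) x + deriv (fun s => u₂ x s t) y = 0)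
    (hvort : ∀ x y t, ω x y t = deriv (fun s => u₂ s y t) x - deriv (fun s => u₁ x s t) y) :
    (∀ x y t,
      deriv (fun s => -ω (-x) (y + lam / 2) s) t +
        β * ((-u₁ (-x) (y + lam / 2) t) * deriv (fun s => -ω (-s) (y + lam / 2) t) x +
             u₂ (-x) (y + lam / 2) t * deriv (fun s => -ω (-x) (s + lam / 2) t) y) =
      ν * (deriv (fun s => deriv (fun r => -ω (-r) (y + lam / 2) t) s) x +
           deriv (fun s => deriv (fun r => -ω (-x) (r + lam / 2) t) s) y) -
        α * (-ω (-x) (y + lam / 2) t) + χ * κ * Real.cos (κ * y)) ∧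
    (∀ x y t,
      deriv (fun s => -u₁ (-s) (y + lam / 2) t) x +
        deriv (fun s => u₂ (-x) (s + lam / 2) t) y = 0) ∧
    (∀ x y t, -ω (-x) (y + lam / 2) t =
      deriv (fun s => u₂ (-s) (y + lam / 2) t) x -
        deriv (fun s => -u₁ (-x) (s + lam / 2) t) y) :=
  kolmogorov_vorticity_invariant_reflection_shift_general β ν α χ lam hlam κ hκ ω u₁ u₂ heq hdiv
    hvort
end
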